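/- Let F(x) = x^m + A x^{m-1} + B ∈ ℤ[x], let p be a prime, and set D = m^m B - (-1)^m (m-1)^{m-1} A^m. Then for every integer n ≥ 0, the discriminant of F(x^{p^n}) equals (-1)^{m p^n (m p^n - 1)/2} · B^{(m-1)p^n - 1} · p^{m n p^n} · D^{p^n}. -/

import Mathlib

/-!
Write `G = F(X^q) = ∏ (X - αᵢ)` with `q = pⁿ` and `N = m q`. The discriminant of `G` is
`(-1)^(N(N-1)/2) ∏ᵢ G'(αᵢ)`, and `G'(x) = q x^(q-1) F'(x^q)` with
`F'(y) = m y^(m-2) (y - γ)`, `γ = -(m-1)A/m`. Hence `∏ᵢ G'(αᵢ)` splits into a power of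
`∏ αᵢ = (-1)^N B` and the product `∏ᵢ (αᵢ^q - γ)`. Exchanging the roles of the two polynomials
(resultant symmetry) turns the latter into `∏_{μ^q = γ} (-1)^N G(μ) = ((-1)^N F(γ))^q`, and
`m^m F(γ) = D`.
-/

open Polynomial Finset

lemma Fin.sum_card_Ioi (N : ℕ) : ∑ i : Fin N, #(Ioi i) = N * (N - 1) / 2 := by
  simp only [Fin.card_Ioi]
  rw [Fin.sum_univ_eq_sum_range (fun i => N - 1 - i), ← sum_range_reflect, ← sum_range_id]
  exact sum_congr rfl fun j hj => by have := mem_range.1 hj; omega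

lemma prod_prod_Ioi_sub_sq_eq {R : Type*} [CommRing R] {N : ℕ} (α : Fin N → R) :
    ∏ i, ∏ j ∈ Ioi i, (α i - α j) ^ 2 =
      (-1) ^ (N * (N - 1) / 2) * ∏ i, ∏ j ∈ univ.erase i, (α i - α j) := by
  have h := prod_prod_Ioi_mul_eq_prod_prod_off_diag fun i j : Fin N => α j - α i
  rw [← Fin.sum_card_Ioi, ← prod_pow_eq_pow_sum]
  simp only [compl_eq_univ_sdiff, sdiff_singleton_eq_erase] at h
  rw [← h, ← prod_mul_distrib]
  refine prod_congr rfl fun i _ => ?_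
  rw [← prod_const, ← prod_mul_distrib]
  exact prod_congr rfl fun j _ => by ring

lemma eval_derivative_prod_X_sub_C {R ι : Type*} [CommRing R] [Fintype ι] [DecidableEq ι]
    (α : ι → R) (i : ι) :
    (derivative (∏ j, (X - C (α j)))).eval (α i) = ∏ j ∈ univ.erase i, (α i - α j) := by
  simpa [Lagrange.nodal, eval_prod] using
    Lagrange.eval_nodal_derivative_eval_node_eq (s := univ) (v := α) (mem_univ i)

lemma prod_eq_neg_one_pow_mul_eval_zero {R ι : Type*} [CommRing R] [Fintype ι] (α : ι → R) :
    ∏ i, α i = (-1) ^ Fintype.card ι * (∏ i, (X - C (α i))).eval 0 := by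
  simp [eval_prod, prod_neg, ← mul_assoc, ← mul_pow]

lemma prod_eval_eq_pow_of_forall_mem_roots {R ι : Type*} [CommRing R] [IsDomain R] [Fintype ι]
    (α : ι → R) {h : R[X]} (hmonic : h.Monic) (hsplit : h.Splits) {e : R}
    (he : ∀ μ ∈ h.roots, (∏ i, (X - C (α i))).eval μ = e) :
    ∏ i, h.eval (α i) = ((-1) ^ Fintype.card ι * e) ^ h.natDegree := by
  have hswap : ∏ i, h.eval (α i) = (h.roots.map fun μ => ∏ i, (α i - μ)).prod := by
    simp only [hsplit.eval_eq_prod_roots_of_monic hmonic, prod_eq_multiset_prod]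
    exact Multiset.prod_map_prod_map _ _
  have hconst : ∀ μ ∈ h.roots, ∏ i, (α i - μ) = (-1) ^ Fintype.card ι * e := by
    intro μ hμ
    rw [← he μ hμ, eval_prod, ← card_univ, ← prod_neg]
    simp
  rw [hswap, Multiset.map_congr rfl hconst, Multiset.map_const', Multiset.prod_replicate,
    ← hsplit.natDegree_eq_card_roots]

section Trinomial

variable {K : Type*} [Field K] {m : ℕ} (A B : K)

lemma eval_derivative_trinomial (hm : 2 ≤ m) (y : K) :
    (derivative (X ^ m + C A * X ^ (m - 1) + C B)).eval y
      = y ^ (m - 2) * (m * y + (m - 1) * A) := by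
  obtain ⟨k, rfl⟩ : ∃ k, m = k + 2 := ⟨m - 2, by omega⟩
  simp only [derivative_add, derivative_C, derivative_mul, derivative_X_pow, eval_add, eval_mul,
    eval_C, eval_pow, eval_X, zero_mul, zero_add, add_zero]
  simp only [Nat.add_sub_cancel, show k + 2 - 1 = k + 1 by omega]
  push_cast
  ring

lemma pow_mul_eval_trinomial (hm : 1 ≤ m) {γ : K} (hγ : m * γ = -((m - 1) * A)) :
    (m : K) ^ m * (X ^ m + C A * X ^ (m - 1) + C B).eval γ
      = m ^ m * B - (-1) ^ m * (m - 1) ^ (m - 1) * A ^ m := by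
  obtain ⟨k, rfl⟩ : ∃ k, m = k + 1 := ⟨m - 1, by omega⟩
  calc (↑(k + 1) : K) ^ (k + 1) * (X ^ (k + 1) + C A * X ^ (k + 1 - 1) + C B).eval γ
      = (↑(k + 1) * γ) ^ (k + 1) + ↑(k + 1) * A * (↑(k + 1) * γ) ^ k
          + ↑(k + 1) ^ (k + 1) * B := by
        simp only [eval_add, eval_mul, eval_C, eval_pow, eval_X, Nat.add_sub_cancel]
        ring
    _ = _ := by
        rw [hγ, Nat.add_sub_cancel]
        push_cast
        ring

theorem prod_prod_Ioi_sub_sq_of_trinomial_comp_X_pow [IsAlgClosed K] {q : ℕ} (hm : 2 ≤ m)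
    (hq : 0 < q) (hmK : (m : K) ≠ 0) (α : Fin (m * q) → K)
    (hroots : (X ^ m + C A * X ^ (m - 1) + C B).comp (X ^ q) = ∏ i, (X - C (α i))) :
    ∏ i, ∏ j ∈ Ioi i, (α i - α j) ^ 2
      = (-1) ^ (m * q * (m * q - 1) / 2) * B ^ ((m - 1) * q - 1) * (q : K) ^ (m * q)
        * ((m : K) ^ m * B - (-1) ^ m * ((m : K) - 1) ^ (m - 1) * A ^ m) ^ q := by
  set F : K[X] := X ^ m + C A * X ^ (m - 1) + C B
  set γ : K := -((m - 1) * A) / m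
  have hγ : (m : K) * γ = -((m - 1) * A) := mul_div_cancel₀ _ hmK
  have hexp : q - 1 + q * (m - 2) = (m - 1) * q - 1 ∧ (m - 1) * q - 1 + q = m * q - 1 := by
    have h1 : 1 ≤ (m - 1) * q := Nat.mul_pos (by omega) hq
    have h2 : 1 ≤ m * q := Nat.mul_pos (by omega) hq
    constructor <;> zify [hq, hm, h1, h2, (by omega : 1 ≤ m)] <;> ring
  have hG : ∀ x, (∏ i, (X - C (α i))).eval x = F.eval (x ^ q) := fun x => by
    rw [← hroots, eval_comp]; simp
  have hderiv : ∀ i, ∏ j ∈ univ.erase i, (α i - α j)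
      = q * m * α i ^ ((m - 1) * q - 1) * (α i ^ q - γ) := by
    intro i
    rw [← eval_derivative_prod_X_sub_C, ← hroots, derivative_comp, eval_mul, eval_comp,
      eval_derivative_trinomial A B hm, derivative_X_pow, ← hexp.1]
    simp only [eval_mul, eval_C, eval_pow, eval_X]
    rw [pow_add, pow_mul]
    linear_combination (q * α i ^ (q - 1) * (α i ^ q) ^ (m - 2)) * hγ
  have hprod : ∏ i, α i = (-1) ^ (m * q) * B := by
    rw [prod_eq_neg_one_pow_mul_eval_zero, hG, zero_pow hq.ne']
    simp [F, zero_pow (by omega : m ≠ 0), zero_pow (by omega : m - 1 ≠ 0)]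
  have hres : ∏ i, (α i ^ q - γ) = ((-1) ^ (m * q) * F.eval γ) ^ q := by
    have := prod_eval_eq_pow_of_forall_mem_roots α (monic_X_pow_sub_C γ hq.ne')
      (IsAlgClosed.splits _) (e := F.eval γ) fun μ hμ => by
        rw [hG, ← (mem_roots_sub_C (by simpa using hq)).1 hμ]
        simp
    simpa [natDegree_X_pow_sub_C] using this
  have hsign : ((-1 : K) ^ (m * q)) ^ ((m - 1) * q - 1 + q) = 1 := by
    rw [hexp.2, ← pow_mul]; exact (Nat.even_mul_pred_self _).neg_one_pow
  calc ∏ i, ∏ j ∈ Ioi i, (α i - α j) ^ 2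
      = (-1) ^ (m * q * (m * q - 1) / 2) * ∏ i, ∏ j ∈ univ.erase i, (α i - α j) :=
        prod_prod_Ioi_sub_sq_eq α
    _ = (-1) ^ (m * q * (m * q - 1) / 2) * ((q * m) ^ (m * q)
          * (∏ i, α i) ^ ((m - 1) * q - 1) * ∏ i, (α i ^ q - γ)) := by
        simp only [hderiv, prod_mul_distrib, prod_const, prod_pow, card_univ, Fintype.card_fin,
          mul_pow]
    _ = (-1) ^ (m * q * (m * q - 1) / 2) * B ^ ((m - 1) * q - 1) * (q : K) ^ (m * q)
          * ((m : K) ^ m * F.eval γ) ^ q * ((-1 : K) ^ (m * q)) ^ ((m - 1) * q - 1 + q) := by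
        rw [hprod, hres, mul_pow, mul_pow, mul_pow, mul_pow, pow_mul]; ring
    _ = _ := by rw [pow_mul_eval_trinomial A B (by omega) hγ, hsign, mul_one]

end Trinomial

theorem stmt_2 (m : ℕ) (hm : 2 ≤ m) (A B : ℤ) (p : ℕ) (hp : p.Prime) (n : ℕ)
    (D : ℤ) (hD : D = (m : ℤ) ^ m * B - (-1) ^ m * ((m : ℤ) - 1) ^ (m - 1) * A ^ m)
    (α : Fin (m * p ^ n) → ℂ)
    (hroots : ((X ^ m + C A * X ^ (m - 1) + C B : Polynomial ℤ).comp (X ^ p ^ n)).map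
        (Int.castRingHom ℂ) = ∏ i, (X - C (α i))) :
    ∏ i, ∏ j ∈ Finset.Ioi i, (α i - α j) ^ 2
      = (-1) ^ (m * p ^ n * (m * p ^ n - 1) / 2) * (B : ℂ) ^ ((m - 1) * p ^ n - 1)
        * (p : ℂ) ^ (m * n * p ^ n) * (D : ℂ) ^ p ^ n := by
  have hrootsℂ : (X ^ m + C (A : ℂ) * X ^ (m - 1) + C (B : ℂ)).comp (X ^ p ^ n)
      = ∏ i, (X - C (α i)) := by
    rw [← hroots, Polynomial.map_comp]
    simp
  rw [prod_prod_Ioi_sub_sq_of_trinomial_comp_X_pow _ _ hm (pow_pos hp.pos n)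
    (Nat.cast_ne_zero.2 (by omega)) α hrootsℂ, hD]
  push_cast
  ring
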